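/- Define B_n for n ≥ 0 by B_0 = 0 and, for n ≥ 1, B_n = C(n−1,2) + (2(n−1)/n)∑_{j=1}^{n} M_{j−1} + (2/n)∑_{j=1}^{n} B_{j−1} + (1/n)∑_{j=1}^{n} M_{j−1}M_{n−j}, where M_k = 2(k+1)H_k − 4k. Then for all n ≥ 1, B_n = 2(n+1)²(H_n² − H_n^{(2)}) − (8n+2)(n+1)H_n + (23n² + 17n)/2. -/

import Mathlib

/-!
Every sum in the recurrence has a closed form in `H n` and `H2 n`. The basic one is the harmonic
convolution `∑_{k<n} H_k / (n - k) = H_n² - H_n^{(2)}`, whose increment in `n` is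
`∑_{k<n} 1/((k+1)(n-k)) = 2 H_n / (n+1)` by partial fractions. Since `M_{k+1} - M_k = 2 H_{k+1} - 2`,
the convolutions `∑ M_k H_{n-k}` and `∑ M_k M_{n-k}` then follow by induction on `n`. Substituting
these shows that the claimed closed form satisfies the recurrence, and the recurrence determines
`B` by strong induction.
-/

open Finset

noncomputable def H (n : ℕ) : ℝ := ∑ i ∈ Finset.Icc 1 n, (1:ℝ)/i
noncomputable def H2 (n : ℕ) : ℝ := ∑ i ∈ Finset.Icc 1 n, (1:ℝ)/(i:ℝ)^2

noncomputable def M (n : ℕ) : ℝ := 2*((n:ℝ)+1)*H n - 4*(n:ℝ)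

@[simp]
lemma H_zero : H 0 = 0 := by simp [H]

@[simp]
lemma H2_zero : H2 0 = 0 := by simp [H2]

lemma H_succ (n : ℕ) : H (n + 1) = H n + 1 / ((n : ℝ) + 1) := by
  rw [H, H, sum_Icc_succ_top (by omega)]
  push_cast
  ring

lemma H2_succ (n : ℕ) : H2 (n + 1) = H2 n + 1 / ((n : ℝ) + 1) ^ 2 := by
  rw [H2, H2, sum_Icc_succ_top (by omega)]
  push_cast
  ring

@[simp]
lemma M_zero : M 0 = 0 := by simp [M]

lemma M_succ (n : ℕ) : M (n + 1) = M n + 2 * H (n + 1) - 2 := by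
  rw [M, M, H_succ]
  push_cast
  field_simp
  ring

lemma sum_Icc_one_comp_sub_one {α : Type*} [AddCommMonoid α] (f : ℕ → α) (n : ℕ) :
    ∑ j ∈ Icc 1 n, f (j - 1) = ∑ k ∈ range n, f k := by
  induction n with
  | zero => simp
  | succ n ih => rw [sum_Icc_succ_top (by omega), sum_range_succ, ih, Nat.add_sub_cancel]

lemma cast_sub_ne_zero {n k : ℕ} (hk : k < n) : ((n - k : ℕ) : ℝ) ≠ 0 := by
  have : 0 < n - k := Nat.sub_pos_of_lt hk
  positivity

lemma sum_range_one_div_succ (n : ℕ) : ∑ k ∈ range n, 1 / ((k : ℝ) + 1) = H n := by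
  induction n with
  | zero => simp
  | succ n ih => rw [sum_range_succ, ih, H_succ]

lemma sum_range_one_div_sub (n : ℕ) : ∑ k ∈ range n, 1 / ((n - k : ℕ) : ℝ) = H n := by
  rw [← sum_range_reflect, ← sum_range_one_div_succ]
  refine sum_congr rfl fun k hk => ?_
  rw [mem_range] at hk
  rw [show n - (n - 1 - k) = k + 1 by omega]
  push_cast
  rfl

lemma sum_range_one_div_succ_mul_sub (n : ℕ) :
    ∑ k ∈ range n, 1 / (((k : ℝ) + 1) * ((n - k : ℕ) : ℝ)) = 2 * H n / ((n : ℝ) + 1) := by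
  have partial_fractions : ∀ k ∈ range n, 1 / (((k : ℝ) + 1) * ((n - k : ℕ) : ℝ))
      = (1 / ((k : ℝ) + 1) + 1 / ((n - k : ℕ) : ℝ)) / ((n : ℝ) + 1) := by
    intro k hk
    have hk := mem_range.mp hk
    have hnk := cast_sub_ne_zero hk
    rw [Nat.cast_sub hk.le] at hnk ⊢
    field_simp
    ring
  rw [sum_congr rfl partial_fractions, ← sum_div, sum_add_distrib, sum_range_one_div_succ,
    sum_range_one_div_sub]
  ring

lemma sum_range_H_div_sub (n : ℕ) :
    ∑ k ∈ range n, H k / ((n - k : ℕ) : ℝ) = H n ^ 2 - H2 n := by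
  induction n with
  | zero => simp
  | succ n ih =>
    have shift : ∀ k ∈ range n, H (k + 1) / ((n + 1 - (k + 1) : ℕ) : ℝ)
        = H k / ((n - k : ℕ) : ℝ) + 1 / (((k : ℝ) + 1) * ((n - k : ℕ) : ℝ)) := by
      intro k hk
      have hnk := cast_sub_ne_zero (mem_range.mp hk)
      rw [Nat.add_sub_add_right, H_succ]
      field_simp
    rw [sum_range_succ', sum_congr rfl shift, sum_add_distrib, ih,
      sum_range_one_div_succ_mul_sub, H_zero, H_succ, H2_succ]
    field_simp
    ring

lemma sum_range_H (n : ℕ) : ∑ k ∈ range n, H k = n * H n - n := by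
  induction n with
  | zero => simp
  | succ n ih =>
    rw [sum_range_succ, ih, H_succ]
    push_cast
    field_simp
    ring

lemma sum_range_M (n : ℕ) :
    ∑ k ∈ range n, M k = n * (n + 1) * H n + n / 2 - 5 * n ^ 2 / 2 := by
  induction n with
  | zero => simp
  | succ n ih =>
    rw [sum_range_succ, ih, M, H_succ]
    push_cast
    field_simp
    ring

lemma sum_range_M_div_sub (n : ℕ) : ∑ k ∈ range n, M k / ((n - k : ℕ) : ℝ)
    = 2 * (n + 1) * (H n ^ 2 - H2 n) - 6 * n * H n + 6 * n := by
  have split : ∀ k ∈ range n, M k / ((n - k : ℕ) : ℝ)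
      = 2 * (n + 1) * (H k / ((n - k : ℕ) : ℝ)) - 2 * H k
        - 4 * n * (1 / ((n - k : ℕ) : ℝ)) + 4 := by
    intro k hk
    have hk := mem_range.mp hk
    have hnk := cast_sub_ne_zero hk
    rw [Nat.cast_sub hk.le] at hnk ⊢
    rw [M]
    field_simp
    ring
  rw [sum_congr rfl split]
  simp only [sum_add_distrib, sum_sub_distrib, ← mul_sum, sum_const, card_range]
  rw [sum_range_H_div_sub, sum_range_H, sum_range_one_div_sub]
  simp only [nsmul_eq_mul]
  ring

lemma sum_range_M_mul_H_sub (n : ℕ) : ∑ k ∈ range n, M k * H (n - k)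
    = (n + 1) * (n + 2) * (H n ^ 2 - H2 n) - (4 * n ^ 2 + 6 * n) * H n + 5 * n ^ 2 + 5 * n := by
  induction n with
  | zero => simp
  | succ n ih =>
    have split : ∀ k ∈ range (n + 1), M k * H (n + 1 - k)
        = M k * H (n - k) + M k / ((n + 1 - k : ℕ) : ℝ) := by
      intro k hk
      rw [show n + 1 - k = n - k + 1 by have := mem_range.mp hk; omega, H_succ]
      push_cast
      ring
    rw [sum_congr rfl split, sum_add_distrib, sum_range_succ (fun k => M k * H (n - k)), ih,
      Nat.sub_self, H_zero, sum_range_M_div_sub, H_succ, H2_succ]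
    push_cast
    field_simp
    ring

lemma sum_range_M_mul_M_sub (n : ℕ) : ∑ k ∈ range (n + 1), M k * M (n - k)
    = 2 / 3 * (n + 1) * (n + 2) * (n + 3) * (H n ^ 2 - H2 n)
      - (122 * n / 9 + 44 * n ^ 2 / 3 + 34 * n ^ 3 / 9) * H n
      + 257 * n / 27 + 146 * n ^ 2 / 9 + 169 * n ^ 3 / 27 := by
  induction n with
  | zero => simp
  | succ n ih =>
    have split : ∀ k ∈ range (n + 1), M k * M (n + 1 - k)
        = M k * M (n - k) + 2 * (M k * H (n + 1 - k)) - 2 * M k := by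
      intro k hk
      rw [show n + 1 - k = n - k + 1 by have := mem_range.mp hk; omega, M_succ]
      ring
    rw [sum_range_succ, Nat.sub_self, M_zero, mul_zero, add_zero, sum_congr rfl split]
    simp only [sum_add_distrib, sum_sub_distrib, ← mul_sum]
    rw [ih, sum_range_M_mul_H_sub, sum_range_M, H_succ, H2_succ]
    push_cast
    field_simp
    ring

noncomputable def Bclosed (n : ℕ) : ℝ :=
  2 * ((n : ℝ) + 1) ^ 2 * ((H n) ^ 2 - H2 n) - (8 * (n : ℝ) + 2) * ((n : ℝ) + 1) * H n
    + (23 * (n : ℝ) ^ 2 + 17 * (n : ℝ)) / 2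

lemma Bclosed_zero : Bclosed 0 = 0 := by simp [Bclosed]

lemma sum_range_Bclosed (n : ℕ) : ∑ k ∈ range n, Bclosed k
    = n * (n + 1) * (2 * n + 1) / 3 * (H n ^ 2 - H2 n)
      - (2 * n / 9 + 8 * n ^ 2 / 3 + 28 * n ^ 3 / 9) * H n
      - 7 * n / 27 + 25 * n ^ 2 / 18 + 263 * n ^ 3 / 54 := by
  induction n with
  | zero => simp
  | succ n ih =>
    rw [sum_range_succ, ih, Bclosed, H_succ, H2_succ]
    push_cast
    field_simp
    ring

lemma Bclosed_recurrence (n : ℕ) (hn : 1 ≤ n) : Bclosed n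
    = ((n : ℝ) - 1) * ((n : ℝ) - 2) / 2
      + (2 * ((n : ℝ) - 1) / (n : ℝ)) * ∑ j ∈ Icc 1 n, M (j - 1)
      + (2 / (n : ℝ)) * ∑ j ∈ Icc 1 n, Bclosed (j - 1)
      + (1 / (n : ℝ)) * ∑ j ∈ Icc 1 n, M (j - 1) * M (n - j) := by
  obtain ⟨m, rfl⟩ : ∃ m, n = m + 1 := ⟨n - 1, by omega⟩
  have reflect : ∀ j ∈ Icc 1 (m + 1), M (j - 1) * M (m + 1 - j) = M (j - 1) * M (m - (j - 1)) := by
    intro j hj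
    rw [show m + 1 - j = m - (j - 1) by have := mem_Icc.mp hj; omega]
  rw [sum_congr rfl reflect]
  simp only [sum_Icc_one_comp_sub_one (f := fun k => M k * M (m - k)), sum_Icc_one_comp_sub_one]
  rw [sum_range_M, sum_range_Bclosed, sum_range_M_mul_M_sub, Bclosed, H_succ, H2_succ]
  push_cast
  field_simp
  ring

theorem stmt14 (B : ℕ → ℝ) (hB0 : B 0 = 0)
    (hB : ∀ n : ℕ, 1 ≤ n → B n
      = ((n:ℝ)-1)*((n:ℝ)-2)/2
        + (2*((n:ℝ)-1)/(n:ℝ)) * ∑ j ∈ Icc 1 n, M (j-1)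
        + (2/(n:ℝ)) * ∑ j ∈ Icc 1 n, B (j-1)
        + (1/(n:ℝ)) * ∑ j ∈ Icc 1 n, M (j-1) * M (n-j)) :
    ∀ n : ℕ, 1 ≤ n →
      B n = 2*((n:ℝ)+1)^2*((H n)^2 - H2 n) - (8*(n:ℝ)+2)*((n:ℝ)+1)*H n
            + (23*(n:ℝ)^2 + 17*(n:ℝ))/2 := by
  have hB_eq : ∀ n, B n = Bclosed n := by
    intro n
    induction n using Nat.strong_induction_on with
    | _ n ih =>
      rcases Nat.eq_zero_or_pos n with rfl | hn
      · rw [hB0, Bclosed_zero]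
      · rw [hB n hn, Bclosed_recurrence n hn]
        congr 3
        exact sum_congr rfl fun j hj => ih (j - 1) (by have := mem_Icc.mp hj; omega)
  exact fun n _ => hB_eq n
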